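/- arXiv:2204.02332 — 4 statements merged into one kernel-verified Lean document; each statement's English description precedes it below -/
import Mathlib

section
/- Let n ≥ 1, let τ = (τ₁,…,τₙ) ∈ [0,∞)ⁿ, and let X = (X₁,…,Xₙ) be a vector of independent standard Gaussian random variables. Then for every Borel (Lebesgue-measurable) set A ⊆ ℝⁿ: √( P(X+τ ∈ A) · P(X−τ ∈ A) ) ≥ e^{−‖τ‖₂²/2} · P(X ∈ A), where ‖τ‖₂ is the Euclidean norm of τ. -/
/-!
Cameron–Martin: the standard Gaussian measure `γ` translated by `t` has density
`ρ_t x = exp (⟪t, x⟫ - ‖t‖² / 2)` with respect to `γ`, so `P(X + τ ∈ A) = ∫_A ρ_τ dγ` and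
`P(X - τ ∈ A) = ∫_A ρ_{-τ} dγ`. Since `√(ρ_τ ρ_{-τ}) = exp (-‖τ‖² / 2)` is constant,
Cauchy–Schwarz applied to `√ρ_τ` and `√ρ_{-τ}` on `A` gives the inequality.
-/

open MeasureTheory ProbabilityTheory Real
open scoped ENNReal NNReal

namespace MeasureTheory

variable {ι : Type*} [Fintype ι] {E : ι → Type*} [∀ i, MeasurableSpace (E i)]
  (μ : ∀ i, Measure (E i)) [∀ i, IsProbabilityMeasure (μ i)]

lemma lintegral_pi_prod_eq_prod_lintegral {f : ∀ i, E i → ℝ≥0∞} (hf : ∀ i, Measurable (f i)) :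
    ∫⁻ x, ∏ i, f i (x i) ∂Measure.pi μ = ∏ i, ∫⁻ y, f i y ∂μ i := by
  rw [lintegral_prod_eq_prod_lintegral_of_indepFun _ _
    (iIndepFun_pi fun i => (hf i).aemeasurable) fun i => (hf i).comp (measurable_pi_apply i)]
  exact Finset.prod_congr rfl fun i _ => (measurePreserving_eval μ i).lintegral_comp (hf i)

lemma Measure.pi_withDensity {f : ∀ i, E i → ℝ≥0∞} (hf : ∀ i, Measurable (f i))
    [∀ i, SigmaFinite ((μ i).withDensity (f i))] :
    Measure.pi (fun i => (μ i).withDensity (f i))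
      = (Measure.pi μ).withDensity fun x => ∏ i, f i (x i) := by
  refine Measure.pi_eq fun s hs => ?_
  have hindicator : (Set.univ.pi s).indicator (fun x => ∏ i, f i (x i))
      = fun x => ∏ i, (s i).indicator (f i) (x i) := by
    funext x
    classical
    simp only [Set.indicator, Set.mem_univ_pi, Finset.prod_ite_zero, Finset.mem_univ,
      forall_const]
  rw [withDensity_apply _ (.univ_pi hs), ← lintegral_indicator (.univ_pi hs), hindicator,
    lintegral_pi_prod_eq_prod_lintegral μ fun i => (hf i).indicator (hs i)]
  exact Finset.prod_congr rfl fun i _ => by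
    rw [lintegral_indicator (hs i), withDensity_apply _ (hs i)]

end MeasureTheory

lemma ENNReal.lintegral_rpow_half_mul_le {α : Type*} [MeasurableSpace α] (μ : Measure α)
    {f g : α → ℝ≥0∞} (hf : AEMeasurable f μ) (hg : AEMeasurable g μ) :
    ∫⁻ a, f a ^ (1 / 2 : ℝ) * g a ^ (1 / 2 : ℝ) ∂μ
      ≤ (∫⁻ a, f a ∂μ) ^ (1 / 2 : ℝ) * (∫⁻ a, g a ∂μ) ^ (1 / 2 : ℝ) := by
  have h := ENNReal.lintegral_mul_le_Lp_mul_Lq μ Real.HolderConjugate.two_two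
    (hf.pow_const (1 / 2 : ℝ)) (hg.pow_const (1 / 2 : ℝ))
  simp only [← ENNReal.rpow_mul] at h
  norm_num at h
  exact h

namespace ProbabilityTheory

lemma gaussianReal_eq_withDensity_exp (m : ℝ) {v : ℝ≥0} (hv : v ≠ 0) :
    gaussianReal m v = (gaussianReal 0 v).withDensity
      fun y => ENNReal.ofReal (exp ((m * y - m ^ 2 / 2) / v)) := by
  rw [gaussianReal_of_var_ne_zero _ hv, gaussianReal_of_var_ne_zero _ hv,
    ← withDensity_mul _ (measurable_gaussianPDF 0 v) (by fun_prop)]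
  congr 1
  funext y
  rw [Pi.mul_apply, gaussianPDF, gaussianPDF, ← ENNReal.ofReal_mul (gaussianPDFReal_nonneg 0 v y)]
  congr 1
  simp only [gaussianPDFReal, mul_assoc, ← exp_add]
  congr 2
  field_simp
  ring

variable {ι : Type*} [Fintype ι]

noncomputable def cameronMartinDensity (t x : ι → ℝ) : ℝ≥0∞ :=
  ENNReal.ofReal (exp (∑ i, t i * x i - (∑ i, t i ^ 2) / 2))

@[fun_prop]
lemma measurable_cameronMartinDensity (t : ι → ℝ) : Measurable (cameronMartinDensity t) := by
  unfold cameronMartinDensity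
  fun_prop

lemma cameronMartinDensity_rpow_half_mul_neg (t x : ι → ℝ) :
    cameronMartinDensity t x ^ (1 / 2 : ℝ) * cameronMartinDensity (-t) x ^ (1 / 2 : ℝ)
      = ENNReal.ofReal (exp (-(∑ i, t i ^ 2) / 2)) := by
  simp only [cameronMartinDensity, ENNReal.ofReal_rpow_of_pos (exp_pos _), ← exp_mul,
    ← ENNReal.ofReal_mul (exp_pos _).le, ← exp_add]
  congr 2
  simp only [Pi.neg_apply, neg_mul, Finset.sum_neg_distrib, neg_sq]
  ring

lemma pi_gaussianReal_map_add_eq_withDensity (t : ι → ℝ) :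
    (Measure.pi fun _ : ι => gaussianReal 0 1).map (· + t)
      = (Measure.pi fun _ : ι => gaussianReal 0 1).withDensity (cameronMartinDensity t) := by
  have hmap : (Measure.pi fun _ : ι => gaussianReal 0 1).map (· + t)
      = Measure.pi fun i => gaussianReal (t i) 1 :=
    (measurePreserving_pi _ _ fun i => ⟨measurable_add_const (t i), by
      rw [gaussianReal_map_add_const, zero_add]⟩).map_eq
  rw [hmap]
  conv_lhs => enter [1, i]; rw [gaussianReal_eq_withDensity_exp (t i) one_ne_zero]
  simp only [NNReal.coe_one, div_one]
  rw [Measure.pi_withDensity _ fun i => by fun_prop]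
  congr 1
  funext x
  rw [cameronMartinDensity, ← ENNReal.ofReal_prod_of_nonneg fun i _ => (exp_pos _).le,
    ← exp_sum, Finset.sum_sub_distrib, Finset.sum_div]

lemma pi_gaussianReal_preimage_add (t : ι → ℝ) {A : Set (ι → ℝ)} (hA : MeasurableSet A) :
    (Measure.pi fun _ : ι => gaussianReal 0 1) {x | x + t ∈ A}
      = ∫⁻ x in A, cameronMartinDensity t x ∂Measure.pi fun _ : ι => gaussianReal 0 1 := by
  rw [← withDensity_apply _ hA, ← pi_gaussianReal_map_add_eq_withDensity,
    Measure.map_apply (measurable_add_const t) hA]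
  rfl

end ProbabilityTheory

theorem gaussian_shift_general (n : ℕ) (τ : Fin n → ℝ)
    (A : Set (Fin n → ℝ)) (hA : MeasurableSet A) :
    Real.exp (-(∑ i, τ i ^ 2) / 2) *
        ((Measure.pi fun _ : Fin n => gaussianReal 0 1) A).toReal ≤
      Real.sqrt
        (((Measure.pi fun _ : Fin n => gaussianReal 0 1) {x | x + τ ∈ A}).toReal *
          ((Measure.pi fun _ : Fin n => gaussianReal 0 1) {x | x - τ ∈ A}).toReal) := by
  set μ := Measure.pi fun _ : Fin n => gaussianReal 0 1
  set P := μ {x | x + τ ∈ A}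
  set Q := μ {x | x - τ ∈ A}
  have hP : P = ∫⁻ x in A, cameronMartinDensity τ x ∂μ := pi_gaussianReal_preimage_add τ hA
  have hQ : Q = ∫⁻ x in A, cameronMartinDensity (-τ) x ∂μ := by
    simpa only [Q, sub_eq_add_neg] using pi_gaussianReal_preimage_add (-τ) hA
  have key : ENNReal.ofReal (exp (-(∑ i, τ i ^ 2) / 2)) * μ A
      ≤ P ^ (1 / 2 : ℝ) * Q ^ (1 / 2 : ℝ) := by
    rw [hP, hQ, ← setLIntegral_const,
      ← lintegral_congr (cameronMartinDensity_rpow_half_mul_neg τ)]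
    exact ENNReal.lintegral_rpow_half_mul_le _ (by fun_prop) (by fun_prop)
  calc exp (-(∑ i, τ i ^ 2) / 2) * (μ A).toReal
      = (ENNReal.ofReal (exp (-(∑ i, τ i ^ 2) / 2)) * μ A).toReal := by
        rw [ENNReal.toReal_mul, ENNReal.toReal_ofReal (exp_pos _).le]
    _ ≤ (P ^ (1 / 2 : ℝ) * Q ^ (1 / 2 : ℝ)).toReal := ENNReal.toReal_mono (by finiteness) key
    _ = √(P.toReal * Q.toReal) := by
        rw [ENNReal.toReal_mul, ← ENNReal.toReal_rpow, ← ENNReal.toReal_rpow,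
          ← Real.mul_rpow ENNReal.toReal_nonneg ENNReal.toReal_nonneg, Real.sqrt_eq_rpow]

/-- Gaussian shift inequality (Claim 2.16 of the paper): for a standard Gaussian
vector `X` and `τ` with nonnegative coordinates,
`√(P(X+τ ∈ A) P(X−τ ∈ A)) ≥ e^{−‖τ‖²/2} P(X ∈ A)`. -/
theorem gaussian_shift (n : ℕ) (hn : 1 ≤ n) (τ : Fin n → ℝ) (hτ : ∀ i, 0 ≤ τ i)
    (A : Set (Fin n → ℝ)) (hA : MeasurableSet A) :
    Real.exp (-(∑ i, τ i ^ 2) / 2) *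
        ((Measure.pi fun _ : Fin n => gaussianReal 0 1) A).toReal ≤
      Real.sqrt
        (((Measure.pi fun _ : Fin n => gaussianReal 0 1) {x | x + τ ∈ A}).toReal *
          ((Measure.pi fun _ : Fin n => gaussianReal 0 1) {x | x - τ ∈ A}).toReal) :=
  gaussian_shift_general n τ A hA
end

section
/- Let ν be an absolutely continuous probability measure on ℝ, let S_ν := {w ∈ ℝ : ν((−∞,v]) < ν((−∞,w]) for all v < w}, and let h : ℝ → S_ν be the increasing bijection determined by ν_Gauss((−∞,x]) = ν((−∞,h(x)]) for all x ∈ ℝ, where ν_Gauss is the standard Gaussian measure on ℝ (h(x) is the unique such element of S_ν, which exists since ν is atomless). For δ > 0 define A_δ := { x ∈ ℝ : (h(y) − h(x))/(y − x) ≥ δ for all y ∈ [x−1, x+1] \ {x} }. Then lim_{δ ↓ 0} ν_Gauss(A_δ) = 1. -/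
/-!
Write `γ := gaussianReal 0 1`. Since `γ` charges every interval, `h` is strictly increasing; since
`γ` is inner regular and has no atoms, comparing compact subsets of `h ⁻¹' Iic a` with their maxima
(and of the complement with their minima) shows that `h` pushes `γ` forward to `ν`. Now `h` maps
`{h' = 0}` onto a Lebesgue-null, hence `ν`-null, set, so together with almost everywhere
differentiability of monotone maps, `h'(x) > 0` for `γ`-almost every `x`. At such an `x` slopes
near `x` are at least `h'(x) / 2` and slopes at distance at least `r` are bounded below by strict
monotonicity, so `x ∈ A_δ` for some `δ > 0`; as `A_δ` grows when `δ ↓ 0`, continuity of measure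
from below concludes.
-/

open MeasureTheory ProbabilityTheory Filter Set Topology

section Transport

variable {μ ν : Measure ℝ} {h : ℝ → ℝ}

lemma strictMono_of_measure_Iic_eq [IsFiniteMeasure μ] (hμ : volume ≪ μ)
    (hpush : ∀ x, μ (Iic x) = ν (Iic (h x))) : StrictMono h := by
  intro x y hxy
  have hIoc : μ (Ioc x y) ≠ 0 := fun h0 => hxy.not_ge (by simpa using hμ h0)
  have hlt : μ (Iic x) < μ (Iic y) := by
    rw [← Iic_union_Ioc_eq_Iic hxy.le, measure_union (Iic_disjoint_Ioc le_rfl) measurableSet_Ioc]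
    exact ENNReal.lt_add_right (measure_ne_top _ _) hIoc
  rw [hpush, hpush] at hlt
  exact lt_of_not_ge fun hyx => hlt.not_ge (measure_mono (Iic_subset_Iic.2 hyx))

lemma measure_preimage_Iic_le [μ.InnerRegular] (hh : Monotone h)
    (hpush : ∀ x, μ (Iic x) = ν (Iic (h x))) (a : ℝ) :
    μ (h ⁻¹' Iic a) ≤ ν (Iic a) := by
  rw [(hh.measurable measurableSet_Iic).measure_eq_iSup_isCompact]
  refine iSup₂_le fun K hKa => iSup_le fun hK => ?_
  rcases K.eq_empty_or_nonempty with rfl | hne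
  · simp
  calc μ K ≤ μ (Iic (sSup K)) := measure_mono fun x hx => le_csSup hK.bddAbove hx
    _ = ν (Iic (h (sSup K))) := hpush _
    _ ≤ ν (Iic a) := measure_mono (Iic_subset_Iic.2 (hKa (hK.sSup_mem hne)))

lemma measure_preimage_Ioi_le [μ.InnerRegular] (hh : Monotone h)
    (hpush : ∀ x, μ (Ici x) = ν (Ioi (h x))) (a : ℝ) :
    μ (h ⁻¹' Ioi a) ≤ ν (Ioi a) := by
  rw [(hh.measurable measurableSet_Ioi).measure_eq_iSup_isCompact]
  refine iSup₂_le fun K hKa => iSup_le fun hK => ?_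
  rcases K.eq_empty_or_nonempty with rfl | hne
  · simp
  calc μ K ≤ μ (Ici (sInf K)) := measure_mono fun x hx => csInf_le hK.bddBelow hx
    _ = ν (Ioi (h (sInf K))) := hpush _
    _ ≤ ν (Ioi a) := measure_mono (Ioi_subset_Ioi (hKa (hK.sInf_mem hne)).le)

lemma map_eq_of_measure_Iic_eq [IsProbabilityMeasure μ] [IsProbabilityMeasure ν]
    [NullSingletonClass μ] [μ.InnerRegular] (hh : Monotone h)
    (hpush : ∀ x, μ (Iic x) = ν (Iic (h x))) : μ.map h = ν := by
  have hpush' : ∀ x, μ (Ici x) = ν (Ioi (h x)) := fun x => by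
    rw [← measure_congr Ioi_ae_eq_Ici, ← compl_Iic, ← compl_Iic,
      prob_compl_eq_one_sub measurableSet_Iic, prob_compl_eq_one_sub measurableSet_Iic, hpush]
  refine Measure.ext_of_Iic _ _ fun a => ?_
  rw [Measure.map_apply hh.measurable measurableSet_Iic]
  refine le_antisymm (measure_preimage_Iic_le hh hpush a) ?_
  have hIoi := measure_preimage_Ioi_le hh hpush' a
  rw [← compl_Iic, preimage_compl, prob_compl_eq_one_sub (hh.measurable measurableSet_Iic),
    prob_compl_eq_one_sub measurableSet_Iic] at hIoi
  exact (ENNReal.sub_le_sub_iff_left prob_le_one ENNReal.one_ne_top).1 hIoi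

end Transport

section Derivative

variable {μ : Measure ℝ} {h : ℝ → ℝ}

lemma measure_setOf_hasDerivAt_zero (hh : Measurable h) (hmap : μ.map h ≪ volume) :
    μ {x | HasDerivAt h 0 x} = 0 := by
  have himage : volume (h '' {x | HasDerivAt h 0 x}) = 0 :=
    addHaar_image_eq_zero_of_det_fderivWithin_eq_zero volume (f' := fun _ => 0)
      (fun x hx => by simpa using hx.hasFDerivAt.hasFDerivWithinAt) (fun _ _ => by simp)
  exact nonpos_iff_eq_zero.1 <|
    (Measure.le_map_apply_image hh.aemeasurable _).trans_eq (hmap himage)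

lemma Monotone.ae_exists_hasDerivAt_pos (hh : Monotone h) (hμ : μ ≪ volume)
    (hmap : μ.map h ≪ volume) : ∀ᵐ x ∂μ, ∃ c > 0, HasDerivAt h c x := by
  filter_upwards [hμ.ae_le hh.ae_differentiableAt,
    measure_eq_zero_iff_ae_notMem.1 (measure_setOf_hasDerivAt_zero hh.measurable hmap)]
    with x hdiff hnotzero
  refine ⟨deriv h x, hh.deriv_nonneg.lt_of_ne fun h0 => hnotzero ?_, hdiff.hasDerivAt⟩
  exact h0 ▸ hdiff.hasDerivAt

end Derivative

lemma StrictMono.exists_pos_le_slope {h : ℝ → ℝ} {c x R : ℝ} (hh : StrictMono h) (hc : 0 < c)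
    (hd : HasDerivAt h c x) (hR : 0 < R) :
    ∃ δ > 0, ∀ y ∈ Icc (x - R) (x + R), y ≠ x → δ ≤ (h y - h x) / (y - x) := by
  obtain ⟨r, hr, hnear⟩ :
      ∃ r > 0, ∀ y, |y - x| < r → y ≠ x → c / 2 ≤ (h y - h x) / (y - x) := by
    obtain ⟨r, hr, hball⟩ := Metric.mem_nhdsWithin_iff.1 <|
      (hasDerivAt_iff_tendsto_slope.1 hd).eventually (Ioi_mem_nhds (half_lt_self hc))
    refine ⟨r, hr, fun y hy hne => ?_⟩
    have hslope : c / 2 < slope h x y := hball ⟨by rwa [Metric.mem_ball, Real.dist_eq], hne⟩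
    rw [slope_def_field] at hslope
    exact hslope.le
  set m := min (h (x + r) - h x) (h x - h (x - r))
  have hm : 0 < m := lt_min (sub_pos.2 (hh (by linarith))) (sub_pos.2 (hh (by linarith)))
  have hfar : ∀ {u v : ℝ}, u < v → v - u ≤ R → m ≤ h v - h u →
      m / R ≤ (h v - h u) / (v - u) := fun huv hvu hmle =>
    (div_le_div_of_nonneg_right hmle hR.le).trans
      (div_le_div_of_nonneg_left (hm.le.trans hmle) (sub_pos.2 huv) hvu)
  refine ⟨min (c / 2) (m / R), by positivity, fun y ⟨hy₁, hy₂⟩ hne => ?_⟩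
  rcases lt_or_ge |y - x| r with hy | hy
  · exact (min_le_left _ _).trans (hnear y hy hne)
  refine (min_le_right _ _).trans ?_
  rcases hne.lt_or_gt with hlt | hgt
  · rw [abs_sub_comm, abs_of_pos (sub_pos.2 hlt)] at hy
    rw [← neg_div_neg_eq (h y - h x), neg_sub, neg_sub]
    exact hfar hlt (by linarith)
      ((min_le_right _ _).trans (by linarith [hh.monotone (show y ≤ x - r by linarith)]))
  · rw [abs_of_pos (sub_pos.2 hgt)] at hy
    exact hfar hgt (by linarith)
      ((min_le_left _ _).trans (by linarith [hh.monotone (show x + r ≤ y by linarith)]))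

lemma tendsto_measure_nhdsGT_zero_of_ae_exists_mem {α : Type*} [MeasurableSpace α]
    {μ : Measure α} {A : ℝ → Set α} (hA : Antitone A) (hae : ∀ᵐ x ∂μ, ∃ δ > 0, x ∈ A δ) :
    Tendsto (fun δ => μ (A δ)) (𝓝[>] 0) (𝓝 (μ univ)) := by
  set s : ℝ → Set α := fun t => A (Real.exp (-t))
  have hs : Monotone s := fun t t' htt' => hA (Real.exp_le_exp.2 (neg_le_neg htt'))
  have hunion : μ (⋃ t, s t) = μ univ := by
    refine measure_congr (eventuallyEq_univ.2 ?_)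
    filter_upwards [hae] with x ⟨δ, hδ, hx⟩
    exact mem_iUnion.2 ⟨-Real.log δ, by simpa [s, Real.exp_log hδ] using hx⟩
  have hlim := (tendsto_measure_iUnion_atTop (μ := μ) hs).comp
    (tendsto_neg_atBot_atTop.comp Real.tendsto_log_nhdsGT_zero)
  rw [hunion] at hlim
  refine hlim.congr' (eventually_nhdsWithin_of_forall fun δ hδ => ?_)
  simp [s, Real.exp_log (mem_Ioi.1 hδ)]

theorem slope_set_full_measure_general (ν : Measure ℝ) (hprob : IsProbabilityMeasure ν)
    (habs : ν ≪ (volume : Measure ℝ)) (h : ℝ → ℝ)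
    (hpush : ∀ x : ℝ, gaussianReal 0 1 (Set.Iic x) = ν (Set.Iic (h x))) :
    Tendsto
      (fun δ : ℝ => gaussianReal 0 1
        {x : ℝ | ∀ y ∈ Set.Icc (x - 1) (x + 1), y ≠ x → δ ≤ (h y - h x) / (y - x)})
      (nhdsWithin 0 (Set.Ioi 0)) (nhds 1) := by
  have := nullSingletonClass_gaussianReal (μ := 0) one_ne_zero
  have hmono : StrictMono h :=
    strictMono_of_measure_Iic_eq (gaussianReal_absolutelyContinuous' 0 one_ne_zero) hpush
  have hmap : (gaussianReal 0 1).map h = ν := map_eq_of_measure_Iic_eq hmono.monotone hpush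
  have hderiv := hmono.monotone.ae_exists_hasDerivAt_pos
    (gaussianReal_absolutelyContinuous 0 one_ne_zero) (hmap ▸ habs)
  rw [← measure_univ (μ := gaussianReal 0 1)]
  refine tendsto_measure_nhdsGT_zero_of_ae_exists_mem
    (fun δ δ' hle x hx y hy hne => hle.trans (hx y hy hne)) ?_
  exact hderiv.mono fun x ⟨c, hc, hd⟩ => hmono.exists_pos_le_slope hc hd one_pos

/-- Claim 2.18 of the paper: for an absolutely continuous probability measure `ν` and
the increasing rearrangement `h` transporting the standard Gaussian to `ν`, the set of
points where `h` has slope at least `δ` at all scales up to `1` has Gaussian measure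
tending to `1` as `δ ↓ 0`. -/
theorem slope_set_full_measure (ν : Measure ℝ) (hprob : IsProbabilityMeasure ν)
    (habs : ν ≪ (volume : Measure ℝ)) (h : ℝ → ℝ)
    (hS : ∀ x : ℝ, ∀ v : ℝ, v < h x → ν (Set.Iic v) < ν (Set.Iic (h x)))
    (hpush : ∀ x : ℝ, gaussianReal 0 1 (Set.Iic x) = ν (Set.Iic (h x))) :
    Tendsto
      (fun δ : ℝ => gaussianReal 0 1
        {x : ℝ | ∀ y ∈ Set.Icc (x - 1) (x + 1), y ≠ x → δ ≤ (h y - h x) / (y - x)})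
      (nhdsWithin 0 (Set.Ioi 0)) (nhds 1) :=
  slope_set_full_measure_general ν hprob habs h hpush
end

section
/- Let μ be a norm on ℝ² and let u, v ∈ ℝ² be nonzero and linearly independent. Then the following three statements are equivalent: (1) every point of the closed segment joining u/μ(u) and v/μ(v) satisfies μ = 1 (equivalently, the segment is disjoint from the open unit ball {x : μ(x) < 1}); (2) for all s, t ≥ 0, μ(s·u + t·v) = s·μ(u) + t·μ(v); (3) there exist s, t > 0 with μ(s·u + t·v) = s·μ(u) + t·μ(v). -/
/-!
Equality in the triangle inequality for a seminorm `p` propagates along the cone spanned by two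
vectors: if `p (x + y) = p x + p y` and `β ≤ α`, then writing
`α • (x + y) = (α • x + β • y) + (α - β) • y` gives `α * p x + β * p y ≤ p (α • x + β • y)`, and
the reverse inequality is the triangle inequality. Hence additivity at one interior point of the
cone gives (2), which on the normalized segment reads `p = 1`; conversely the midpoint of that
segment is such an interior point.
-/

namespace Seminorm

variable {E : Type*} [AddCommGroup E] [Module ℝ E] (p : Seminorm ℝ E)

theorem map_smul_add_smul_le {α β : ℝ} (hα : 0 ≤ α) (hβ : 0 ≤ β) (x y : E) :
    p (α • x + β • y) ≤ α * p x + β * p y :=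
  calc p (α • x + β • y) ≤ p (α • x) + p (β • y) := map_add_le_add p _ _
    _ = α * p x + β * p y := by
      rw [map_smul_eq_mul, map_smul_eq_mul, Real.norm_of_nonneg hα, Real.norm_of_nonneg hβ]

theorem le_map_smul_add_smul_of_map_add {x y : E} (h : p (x + y) = p x + p y) {α β : ℝ}
    (hβ : 0 ≤ β) (hβα : β ≤ α) : α * p x + β * p y ≤ p (α • x + β • y) := by
  have hsplit : α • (x + y) = (α • x + β • y) + (α - β) • y := by module
  have htri := map_add_le_add p (α • x + β • y) ((α - β) • y)
  rw [← hsplit, map_smul_eq_mul, map_smul_eq_mul, h, Real.norm_of_nonneg (hβ.trans hβα),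
    Real.norm_of_nonneg (sub_nonneg.mpr hβα)] at htri
  linarith

theorem map_smul_add_smul_of_map_add {x y : E} (h : p (x + y) = p x + p y) {α β : ℝ}
    (hα : 0 ≤ α) (hβ : 0 ≤ β) : p (α • x + β • y) = α * p x + β * p y := by
  refine (p.map_smul_add_smul_le hα hβ x y).antisymm ?_
  rcases le_total β α with hβα | hαβ
  · exact p.le_map_smul_add_smul_of_map_add h hβ hβα
  · rw [add_comm (α • x), add_comm (α * p x)]
    exact p.le_map_smul_add_smul_of_map_add (by rwa [add_comm y, add_comm (p y)]) hα hαβ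

theorem map_smul_add_smul_of_pos_of_map_smul_add_smul {u v : E} {s t : ℝ} (hs : 0 < s)
    (ht : 0 < t) (h : p (s • u + t • v) = s * p u + t * p v) {s' t' : ℝ} (hs' : 0 ≤ s')
    (ht' : 0 ≤ t') : p (s' • u + t' • v) = s' * p u + t' * p v := by
  have hsu : p (s • u) = s * p u := by rw [map_smul_eq_mul, Real.norm_of_nonneg hs.le]
  have htv : p (t • v) = t * p v := by rw [map_smul_eq_mul, Real.norm_of_nonneg ht.le]
  have key := p.map_smul_add_smul_of_map_add (h.trans (by rw [hsu, htv]))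
    (div_nonneg hs' hs.le) (div_nonneg ht' ht.le)
  rw [smul_smul, smul_smul, div_mul_cancel₀ _ hs.ne', div_mul_cancel₀ _ ht.ne', hsu, htv] at key
  rw [key]
  field_simp

theorem map_segment_inv_smul_eq_one {u v : E} (hu : p u ≠ 0) (hv : p v ≠ 0)
    (h : ∀ s t : ℝ, 0 ≤ s → 0 ≤ t → p (s • u + t • v) = s * p u + t * p v) {t : ℝ}
    (ht : t ∈ Set.Icc (0 : ℝ) 1) : p ((1 - t) • ((p u)⁻¹ • u) + t • ((p v)⁻¹ • v)) = 1 := by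
  have hnonneg := apply_nonneg p
  rw [smul_smul, smul_smul,
    h _ _ (mul_nonneg (sub_nonneg.mpr ht.2) (inv_nonneg.mpr (hnonneg u)))
      (mul_nonneg ht.1 (inv_nonneg.mpr (hnonneg v)))]
  field_simp
  ring

theorem exists_pos_map_smul_add_smul_of_map_segment_eq_one {u v : E} (hu : 0 < p u)
    (hv : 0 < p v) {t : ℝ} (ht₀ : 0 < t) (ht₁ : t < 1)
    (h : p ((1 - t) • ((p u)⁻¹ • u) + t • ((p v)⁻¹ • v)) = 1) :
    ∃ s t : ℝ, 0 < s ∧ 0 < t ∧ p (s • u + t • v) = s * p u + t * p v := by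
  refine ⟨(1 - t) * (p u)⁻¹, t * (p v)⁻¹, mul_pos (sub_pos.mpr ht₁) (inv_pos.mpr hu),
    mul_pos ht₀ (inv_pos.mpr hv), ?_⟩
  rw [← smul_smul, ← smul_smul, h]
  field_simp
  ring

end Seminorm

/-- Claim 4.3 of the paper: characterisations of two directions lying on the same
flat edge of the unit ball of a norm on `ℝ²`. -/
theorem flat_edge_characterisation (mu : ℝ × ℝ → ℝ)
    (h_add : ∀ x y : ℝ × ℝ, mu (x + y) ≤ mu x + mu y)
    (h_smul : ∀ (c : ℝ) (x : ℝ × ℝ), mu (c • x) = |c| * mu x)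
    (h_def : ∀ x : ℝ × ℝ, mu x = 0 → x = 0)
    (u v : ℝ × ℝ) (huv : LinearIndependent ℝ ![u, v]) :
    ((∀ t ∈ Set.Icc (0 : ℝ) 1,
        mu ((1 - t) • ((mu u)⁻¹ • u) + t • ((mu v)⁻¹ • v)) = 1) ↔
      (∀ s t : ℝ, 0 ≤ s → 0 ≤ t → mu (s • u + t • v) = s * mu u + t * mu v)) ∧
    ((∀ s t : ℝ, 0 ≤ s → 0 ≤ t → mu (s • u + t • v) = s * mu u + t * mu v) ↔
      (∃ s t : ℝ, 0 < s ∧ 0 < t ∧ mu (s • u + t • v) = s * mu u + t * mu v)) := by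
  let p : Seminorm ℝ (ℝ × ℝ) := Seminorm.of mu h_add fun c x => by rw [h_smul, Real.norm_eq_abs]
  have hpos : ∀ x, x ≠ 0 → 0 < mu x := fun x hx =>
    (apply_nonneg p x).lt_of_ne' (mt (h_def x) hx)
  have hu : 0 < mu u := hpos u (by simpa using huv.ne_zero 0)
  have hv : 0 < mu v := hpos v (by simpa using huv.ne_zero 1)
  have h32 : (∃ s t : ℝ, 0 < s ∧ 0 < t ∧ mu (s • u + t • v) = s * mu u + t * mu v) →
      ∀ s t : ℝ, 0 ≤ s → 0 ≤ t → mu (s • u + t • v) = s * mu u + t * mu v :=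
    fun ⟨_, _, hs, ht, h⟩ _ _ hs' ht' =>
      p.map_smul_add_smul_of_pos_of_map_smul_add_smul hs ht h hs' ht'
  refine ⟨⟨fun h => h32 ?_, fun h t ht => p.map_segment_inv_smul_eq_one hu.ne' hv.ne' h ht⟩,
    fun h => ⟨1, 1, one_pos, one_pos, h 1 1 zero_le_one zero_le_one⟩, h32⟩
  exact p.exists_pos_map_smul_add_smul_of_map_segment_eq_one hu hv (t := 2⁻¹) (by norm_num)
    (by norm_num) (h 2⁻¹ ⟨by norm_num, by norm_num⟩)
end

section
/- Let μ be a norm on ℝ² invariant under the maps (x,y) ↦ (x,−y), (x,y) ↦ (−x,y) and (x,y) ↦ (y,x). Let B = {x : μ(x) ≤ 1}, and for an angle θ write B(θ) for the unique positive number with μ(B(θ)e^{iθ}) = 1 (identifying ℝ² with ℂ). Say θ₁ and θ₂ are on the same flat edge of B if the segment joining B(θ₁)e^{iθ₁} and B(θ₂)e^{iθ₂} is disjoint from the interior of B, and say θ is a vertex direction if there are two distinct lines through B(θ)e^{iθ} each disjoint from the interior of B. Let 0 ≤ θ₁ < θ₂ < π/2 be such that either θ₁ and θ₂ are not on the same flat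 edge of B, or θ₁ is a vertex direction. Then there exists a constant c > 0 (depending on μ, θ₁, θ₂) such that for all R₁, R₂ ≥ 0: μ(R₁e^{iθ₁}) + c·R₂ ≤ μ(R₂e^{iθ₂}) + μ(R₁e^{iθ₁} − R₂e^{iθ₂}), and also μ(R₁e^{iθ₁}) + c·R₂ ≤ μ(R₂e^{−iθ₂}) + μ(R₁e^{iθ₁} − R₂e^{−iθ₂}). -/
/-- The unit vector in direction `θ` (identifying `ℝ²` with `ℂ`). -/
noncomputable def dir (θ : ℝ) : ℝ × ℝ := (Real.cos θ, Real.sin θ)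

/-!
Write `u = dir θ₁` and let `z` be `dir θ₂` or `dir (-θ₂)`. By homogeneity the claim says that the
defect `δ(s) = μ(z) + μ(s • u - z) - s μ(u) ≥ 0` of the triangle inequality is bounded away from
`0` for `s ≥ 0`. If instead `inf δ = 0`, then `μ` is additive on the cone spanned by `u` and `z`,
and every linear functional `ℓ ≤ μ` with `ℓ u = μ u` also has `ℓ z = μ z`. Additivity puts the
segment from `B(θ₁)e^{iθ₁}` to `B(θ₂)e^{iθ₂}` on the unit sphere (for `z = dir (-θ₂)` after the
reflection `y ↦ -y`, as `θ₁` lies between `-θ₁` and `θ₂`). The second property forces all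
supporting lines at `B(θ₁)e^{iθ₁}` to coincide, since `u` and `z` span the plane.
-/

open Module

lemma LinearMap.ext_of_linearIndependent_pair {E F : Type*} [AddCommGroup E] [Module ℝ E]
    [AddCommGroup F] [Module ℝ F] (hE : finrank ℝ E = 2) {x y : E}
    (hxy : LinearIndependent ℝ ![x, y]) {f g : E →ₗ[ℝ] F} (hx : f x = g x) (hy : f y = g y) :
    f = g :=
  (basisOfLinearIndependentOfCardEqFinrank hxy (by simp [hE])).ext fun i => by
    fin_cases i <;> simpa

namespace Seminorm

variable {E : Type*} [AddCommGroup E] [Module ℝ E] (p : Seminorm ℝ E)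

lemma apply_smul_of_nonneg {c : ℝ} (hc : 0 ≤ c) (x : E) : p (c • x) = c * p x := by
  rw [map_smul_eq_mul, Real.norm_of_nonneg hc]

lemma apply_smul_add_smul_le {a b : ℝ} (ha : 0 ≤ a) (hb : 0 ≤ b) (x y : E) :
    p (a • x + b • y) ≤ a * p x + b * p y := by
  rw [← p.apply_smul_of_nonneg ha, ← p.apply_smul_of_nonneg hb]
  exact map_add_le_add p _ _

def ConeAdditive (x y : E) : Prop :=
  ∀ a b : ℝ, 0 ≤ a → 0 ≤ b → a * p x + b * p y ≤ p (a • x + b • y)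

def DefectVanishes (u z : E) : Prop :=
  ∀ ε > 0, ∃ s ≥ 0, p z + p (s • u - z) < s * p u + ε

def OnSameFlatEdge (x y : E) : Prop :=
  ∀ t ∈ Set.Icc (0 : ℝ) 1, 1 ≤ p ((1 - t) • x + t • y)

def IsVertex (x : E) : Prop :=
  ∃ d₁ d₂ : E, LinearIndependent ℝ ![d₁, d₂] ∧
    (∀ t : ℝ, 1 ≤ p (x + t • d₁)) ∧ (∀ t : ℝ, 1 ≤ p (x + t • d₂))

variable {p}

lemma ConeAdditive.onSameFlatEdge {x y : E} (h : p.ConeAdditive x y) (hx : 0 < p x)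
    (hy : 0 < p y) : p.OnSameFlatEdge ((p x)⁻¹ • x) ((p y)⁻¹ • y) := by
  rintro t ⟨ht₀, ht₁⟩
  have := h ((1 - t) * (p x)⁻¹) (t * (p y)⁻¹) (by positivity) (by positivity)
  rw [mul_assoc, mul_assoc, inv_mul_cancel₀ hx.ne', inv_mul_cancel₀ hy.ne'] at this
  simpa only [mul_smul, mul_one, sub_add_cancel] using this

lemma ConeAdditive.of_mem_cone {x y x' y' : E} (h : p.ConeAdditive x y)
    (hx' : ∃ α β : ℝ, 0 ≤ α ∧ 0 ≤ β ∧ x' = α • x + β • y)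
    (hy' : ∃ γ δ : ℝ, 0 ≤ γ ∧ 0 ≤ δ ∧ y' = γ • x + δ • y) : p.ConeAdditive x' y' := by
  obtain ⟨α, β, hα, hβ, rfl⟩ := hx'
  obtain ⟨γ, δ, hγ, hδ, rfl⟩ := hy'
  intro a b ha hb
  have hx_le := p.apply_smul_add_smul_le hα hβ x y
  have hy_le := p.apply_smul_add_smul_le hγ hδ x y
  have hxy := h (a * α + b * γ) (a * β + b * δ) (by positivity) (by positivity)
  have e : a • (α • x + β • y) + b • (γ • x + δ • y)
      = (a * α + b * γ) • x + (a * β + b * δ) • y := by module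
  rw [e]
  linarith [mul_le_mul_of_nonneg_left hx_le ha, mul_le_mul_of_nonneg_left hy_le hb]

lemma ConeAdditive.map {x y : E} (h : p.ConeAdditive x y) (L : E →ₗ[ℝ] E)
    (hL : ∀ v, p (L v) = p v) : p.ConeAdditive (L x) (L y) := by
  intro a b ha hb
  rw [hL, hL, ← map_smul, ← map_smul, ← map_add, hL]
  exact h a b ha hb

lemma DefectVanishes.coneAdditive {u z : E} (h : p.DefectVanishes u z) :
    p.ConeAdditive u z := by
  intro a b ha hb
  refine le_of_forall_pos_lt_add fun ε hε => ?_
  have hb₁ : 0 < 1 + b := by linarith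
  obtain ⟨s, hs, hδ⟩ := h (ε / (1 + b)) (by positivity)
  have hδ' : (1 + b) * (p z + p (s • u - z)) < (1 + b) * (s * p u) + ε := by
    have := mul_lt_mul_of_pos_left hδ hb₁
    rwa [mul_add (1 + b) _ (ε / (1 + b)), mul_div_cancel₀ _ hb₁.ne'] at this
  set S := (1 + b) * s + a
  have hsplit : S • u - z = (1 + b) • (s • u - z) + (a • u + b • z) := by module
  have h₁ : S * p u ≤ p (S • u - z) + p z := by
    rw [← p.apply_smul_of_nonneg (by positivity)]
    simpa using map_add_le_add p (S • u - z) z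
  have h₂ : p (S • u - z) ≤ (1 + b) * p (s • u - z) + p (a • u + b • z) := by
    rw [hsplit, ← p.apply_smul_of_nonneg hb₁.le]
    exact map_add_le_add p _ _
  linarith

lemma DefectVanishes.apply_eq_of_le {u z : E} (h : p.DefectVanishes u z) {ℓ : E →ₗ[ℝ] ℝ}
    (hℓ : ∀ v, ℓ v ≤ p v) (hu : ℓ u = p u) : ℓ z = p z := by
  refine le_antisymm (hℓ z) (le_of_forall_pos_lt_add fun ε hε => ?_)
  obtain ⟨s, -, hδ⟩ := h ε hε
  have := hℓ (s • u - z)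
  rw [map_sub, map_smul, hu, smul_eq_mul] at this
  linarith

lemma exists_dual_le_of_line (hE : finrank ℝ E = 2) {x d : E} (hd : d ≠ 0)
    (hline : ∀ t : ℝ, 1 ≤ p (x + t • d)) :
    ∃ ℓ : E →ₗ[ℝ] ℝ, (∀ v, ℓ v ≤ p v) ∧ ℓ x = 1 ∧ ℓ d = 0 := by
  have hxd : LinearIndependent ℝ ![x, d] := by
    refine LinearIndependent.pair_iff.mpr fun a c hac => ?_
    have ha : a = 0 := by
      by_contra ha
      have h0 : x + (c / a) • d = 0 := by
        rw [← smul_right_inj ha, smul_add, smul_smul, mul_div_cancel₀ _ ha, smul_zero, hac]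
      linarith [h0 ▸ hline (c / a), map_zero p]
    subst ha
    exact ⟨rfl, (smul_eq_zero.mp (by simpa using hac)).resolve_right hd⟩
  let b := basisOfLinearIndependentOfCardEqFinrank hxd (by simp [hE])
  have hb0 : b 0 = x := by simp [b]
  have hb1 : b 1 = d := by simp [b]
  refine ⟨b.coord 0, fun v => ?_, by simp [← hb0], by simp [← hb1]⟩
  set r := b.coord 0 v
  rcases le_or_gt r 0 with hr | hr
  · exact hr.trans (apply_nonneg p v)
  · have hv : v = r • (x + (b.coord 1 v / r) • d) := by
      rw [smul_add, smul_smul, mul_div_cancel₀ _ hr.ne', ← hb0, ← hb1]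
      have := b.sum_repr v
      rw [Fin.sum_univ_two] at this
      exact this.symm
    rw [hv, p.apply_smul_of_nonneg hr.le]
    exact le_mul_of_one_le_right hr.le (hline _)

lemma DefectVanishes.not_isVertex (hE : finrank ℝ E = 2) {u z : E} (h : p.DefectVanishes u z)
    (huz : LinearIndependent ℝ ![u, z]) : ¬ p.IsVertex ((p u)⁻¹ • u) := by
  rintro ⟨d₁, d₂, hd, hline₁, hline₂⟩
  obtain ⟨ℓ₁, hle₁, hu₁, hd₁⟩ := exists_dual_le_of_line hE (by simpa using hd.ne_zero 0) hline₁
  obtain ⟨ℓ₂, hle₂, hu₂, hd₂⟩ := exists_dual_le_of_line hE (by simpa using hd.ne_zero 1) hline₂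
  have hpu : p u ≠ 0 := fun h0 => by simp [h0] at hu₁
  have hℓu : ∀ ℓ : E →ₗ[ℝ] ℝ, ℓ ((p u)⁻¹ • u) = 1 → ℓ u = p u := fun ℓ hℓ => by
    rw [map_smul, smul_eq_mul, inv_mul_eq_one₀ hpu] at hℓ
    exact hℓ.symm
  -- both supporting functionals at `u` also support `z`, hence coincide on the basis `u, z`
  have h₁₂ : ℓ₁ = ℓ₂ := LinearMap.ext_of_linearIndependent_pair hE huz
    (by rw [hℓu ℓ₁ hu₁, hℓu ℓ₂ hu₂])
    (by rw [h.apply_eq_of_le hle₁ (hℓu ℓ₁ hu₁), h.apply_eq_of_le hle₂ (hℓu ℓ₂ hu₂)])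
  have h₀ : ℓ₁ = 0 := LinearMap.ext_of_linearIndependent_pair hE hd (by simpa using hd₁)
    (by simpa [h₁₂] using hd₂)
  simp [h₀] at hu₁

lemma add_mul_le_of_forall_defect_ge {u z : E} {ε : ℝ}
    (hε : ∀ s ≥ 0, s * p u + ε ≤ p z + p (s • u - z)) {R₁ R₂ : ℝ} (hR₁ : 0 ≤ R₁)
    (hR₂ : 0 ≤ R₂) : p (R₁ • u) + ε * R₂ ≤ p (R₂ • z) + p (R₁ • u - R₂ • z) := by
  rcases hR₂.eq_or_lt with rfl | hR₂
  · simp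
  have h := mul_le_mul_of_nonneg_left (hε (R₁ / R₂) (by positivity)) hR₂.le
  have e : R₂ • ((R₁ / R₂) • u - z) = R₁ • u - R₂ • z := by
    rw [smul_sub, smul_smul, mul_div_cancel₀ _ hR₂.ne']
  rw [mul_add, mul_add, ← p.apply_smul_of_nonneg hR₂.le, ← p.apply_smul_of_nonneg hR₂.le, e,
    ← mul_assoc, mul_div_cancel₀ _ hR₂.ne', ← p.apply_smul_of_nonneg hR₁] at h
  linarith

end Seminorm

open Real

lemma dir_ne_zero (θ : ℝ) : dir θ ≠ 0 := fun h => by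
  have := sin_sq_add_cos_sq θ
  simp only [dir, Prod.mk_eq_zero] at h
  simp [h.1, h.2] at this

lemma prodMap_id_neg_dir (θ : ℝ) :
    (LinearMap.id.prodMap (-LinearMap.id) : ℝ × ℝ →ₗ[ℝ] ℝ × ℝ) (dir θ) = dir (-θ) := by
  simp [dir]

lemma sin_sub_smul_dir (a θ b : ℝ) :
    sin (b - a) • dir θ = sin (b - θ) • dir a + sin (θ - a) • dir b := by
  simp only [dir, Prod.smul_mk, Prod.mk_add_mk, smul_eq_mul, sin_sub, Prod.mk.injEq]
  constructor <;> ring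

lemma dir_mem_cone {a θ b : ℝ} (ha : a ≤ θ) (hb : θ ≤ b) (hab : a < b) (hba : b - a < π) :
    ∃ α β : ℝ, 0 ≤ α ∧ 0 ≤ β ∧ dir θ = α • dir a + β • dir b := by
  have hs : 0 < sin (b - a) := sin_pos_of_pos_of_lt_pi (by linarith) hba
  refine ⟨sin (b - θ) / sin (b - a), sin (θ - a) / sin (b - a),
    div_nonneg (sin_nonneg_of_nonneg_of_le_pi (by linarith) (by linarith)) hs.le,
    div_nonneg (sin_nonneg_of_nonneg_of_le_pi (by linarith) (by linarith)) hs.le, ?_⟩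
  rw [div_eq_inv_mul, div_eq_inv_mul, mul_smul, mul_smul, ← smul_add, ← sin_sub_smul_dir,
    inv_smul_smul₀ hs.ne']

lemma linearIndependent_dir_pair {a b : ℝ} (h : sin (b - a) ≠ 0) :
    LinearIndependent ℝ ![dir a, dir b] := by
  refine LinearIndependent.pair_iff.mpr fun s t hst => ?_
  simp only [dir, Prod.smul_mk, Prod.mk_add_mk, smul_eq_mul, Prod.mk_eq_zero] at hst
  rw [sin_sub] at h
  constructor
  · refine (mul_eq_zero.mp ?_).resolve_right h
    linear_combination sin b * hst.1 - cos b * hst.2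
  · refine (mul_eq_zero.mp ?_).resolve_right h
    linear_combination cos a * hst.2 - sin a * hst.1

lemma Seminorm.ConeAdditive.dir_of_dir_neg {p : Seminorm ℝ (ℝ × ℝ)}
    (hp : ∀ x y : ℝ, p (x, -y) = p (x, y)) {θ₁ θ₂ : ℝ} (h0 : 0 ≤ θ₁) (h12 : θ₁ < θ₂)
    (hπ : θ₁ + θ₂ < π) (h : p.ConeAdditive (dir θ₁) (dir (-θ₂))) :
    p.ConeAdditive (dir θ₁) (dir θ₂) := by
  have h' := h.map (LinearMap.id.prodMap (-LinearMap.id)) fun v => hp v.1 v.2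
  rw [prodMap_id_neg_dir, prodMap_id_neg_dir, neg_neg] at h'
  exact h'.of_mem_cone (dir_mem_cone (by linarith) h12.le (by linarith) (by linarith))
    ⟨0, 1, le_rfl, zero_le_one, by simp⟩

theorem wrong_direction_cost_general (mu : ℝ × ℝ → ℝ)
    (h_add : ∀ x y : ℝ × ℝ, mu (x + y) ≤ mu x + mu y)
    (h_smul : ∀ (c : ℝ) (x : ℝ × ℝ), mu (c • x) = |c| * mu x)
    (h_def : ∀ x : ℝ × ℝ, mu x = 0 → x = 0)
    (h_flipy : ∀ x y : ℝ, mu (x, -y) = mu (x, y))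
    (θ₁ θ₂ : ℝ) (hθ₁ : 0 ≤ θ₁) (hθ₁₂ : θ₁ < θ₂) (hθ₂ : θ₂ < Real.pi / 2)
    (hcond :
      (¬ ∀ t ∈ Set.Icc (0 : ℝ) 1,
          1 ≤ mu ((1 - t) • ((mu (dir θ₁))⁻¹ • dir θ₁) +
            t • ((mu (dir θ₂))⁻¹ • dir θ₂))) ∨
      (∃ d₁ d₂ : ℝ × ℝ, LinearIndependent ℝ ![d₁, d₂] ∧
        (∀ t : ℝ, 1 ≤ mu ((mu (dir θ₁))⁻¹ • dir θ₁ + t • d₁)) ∧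
        (∀ t : ℝ, 1 ≤ mu ((mu (dir θ₁))⁻¹ • dir θ₁ + t • d₂)))) :
    ∃ c : ℝ, 0 < c ∧ ∀ R₁ R₂ : ℝ, 0 ≤ R₁ → 0 ≤ R₂ →
      mu (R₁ • dir θ₁) + c * R₂ ≤ mu (R₂ • dir θ₂) + mu (R₁ • dir θ₁ - R₂ • dir θ₂) ∧
      mu (R₁ • dir θ₁) + c * R₂ ≤
        mu (R₂ • dir (-θ₂)) + mu (R₁ • dir θ₁ - R₂ • dir (-θ₂)) := by
  let p : Seminorm ℝ (ℝ × ℝ) := .of mu h_add fun c x => by rw [Real.norm_eq_abs]; exact h_smul c x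
  have hpos : ∀ θ, 0 < p (dir θ) := fun θ =>
    (apply_nonneg p _).lt_of_ne' fun h => dir_ne_zero θ (h_def _ h)
  have hfin : finrank ℝ (ℝ × ℝ) = 2 := by simp
  have key : ∀ z, LinearIndependent ℝ ![dir θ₁, z] →
      (p.ConeAdditive (dir θ₁) z → p.ConeAdditive (dir θ₁) (dir θ₂)) →
      ∃ ε > 0, ∀ s ≥ 0, s * p (dir θ₁) + ε ≤ p z + p (s • dir θ₁ - z) := by
    intro z hz hcone
    by_contra! h
    change p.DefectVanishes (dir θ₁) z at h
    rcases hcond with hflat | hvertex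
    · exact hflat ((hcone h.coneAdditive).onSameFlatEdge (hpos θ₁) (hpos θ₂))
    · exact h.not_isVertex hfin hz hvertex
  obtain ⟨ε₁, hε₁, h₁⟩ := key (dir θ₂)
    (linearIndependent_dir_pair (sin_pos_of_pos_of_lt_pi (by linarith) (by linarith)).ne')
    id
  obtain ⟨ε₂, hε₂, h₂⟩ := key (dir (-θ₂))
    (linearIndependent_dir_pair (sin_neg_of_neg_of_neg_pi_lt (by linarith) (by linarith)).ne)
    (Seminorm.ConeAdditive.dir_of_dir_neg h_flipy hθ₁ hθ₁₂ (by linarith))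
  refine ⟨min ε₁ ε₂, lt_min hε₁ hε₂, fun R₁ R₂ hR₁ hR₂ => ⟨?_, ?_⟩⟩
  · refine Seminorm.add_mul_le_of_forall_defect_ge (p := p) (fun s hs => ?_) hR₁ hR₂
    exact le_trans (by gcongr; exact min_le_left _ _) (h₁ s hs)
  · refine Seminorm.add_mul_le_of_forall_defect_ge (p := p) (fun s hs => ?_) hR₁ hR₂
    exact le_trans (by gcongr; exact min_le_right _ _) (h₂ s hs)

/-- Claim 4.4 of the paper: quantitative cost of going in a wrong direction, for a
norm on `ℝ²` with lattice symmetries, when `θ₁, θ₂` are not on the same flat edge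
of the unit ball, or `θ₁` is a vertex direction. -/
theorem wrong_direction_cost (mu : ℝ × ℝ → ℝ)
    (h_add : ∀ x y : ℝ × ℝ, mu (x + y) ≤ mu x + mu y)
    (h_smul : ∀ (c : ℝ) (x : ℝ × ℝ), mu (c • x) = |c| * mu x)
    (h_def : ∀ x : ℝ × ℝ, mu x = 0 → x = 0)
    (h_flipy : ∀ x y : ℝ, mu (x, -y) = mu (x, y))
    (h_flipx : ∀ x y : ℝ, mu (-x, y) = mu (x, y))
    (h_swap : ∀ x y : ℝ, mu (y, x) = mu (x, y))
    (θ₁ θ₂ : ℝ) (hθ₁ : 0 ≤ θ₁) (hθ₁₂ : θ₁ < θ₂) (hθ₂ : θ₂ < Real.pi / 2)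
    (hcond :
      (¬ ∀ t ∈ Set.Icc (0 : ℝ) 1,
          1 ≤ mu ((1 - t) • ((mu (dir θ₁))⁻¹ • dir θ₁) +
            t • ((mu (dir θ₂))⁻¹ • dir θ₂))) ∨
      (∃ d₁ d₂ : ℝ × ℝ, LinearIndependent ℝ ![d₁, d₂] ∧
        (∀ t : ℝ, 1 ≤ mu ((mu (dir θ₁))⁻¹ • dir θ₁ + t • d₁)) ∧
        (∀ t : ℝ, 1 ≤ mu ((mu (dir θ₁))⁻¹ • dir θ₁ + t • d₂)))) :
    ∃ c : ℝ, 0 < c ∧ ∀ R₁ R₂ : ℝ, 0 ≤ R₁ → 0 ≤ R₂ →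
      mu (R₁ • dir θ₁) + c * R₂ ≤ mu (R₂ • dir θ₂) + mu (R₁ • dir θ₁ - R₂ • dir θ₂) ∧
      mu (R₁ • dir θ₁) + c * R₂ ≤
        mu (R₂ • dir (-θ₂)) + mu (R₁ • dir θ₁ - R₂ • dir (-θ₂)) :=
  wrong_direction_cost_general mu h_add h_smul h_def h_flipy θ₁ θ₂ hθ₁ hθ₁₂ hθ₂ hcond
end
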